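/- Let Q be a quantale, M a Q-module, and N a multiplicative filter of Q that is normal over M. Then N is 1-step over M: for all a, b ∈ M, a ≼_N b implies a ≼¹_N b. -/

import Mathlib

universe u v

/-- A (commutative, integral) quantale: a complete lattice with a commutative monoid
structure whose unit is the top element and whose multiplication distributes over
arbitrary suprema. -/
class IntegralQuantale (Q : Type u) extends CompleteLattice Q, CommMonoid Q where
  one_eq_top : (1 : Q) = ⊤
  mul_sSup : ∀ (a : Q) (S : Set Q), a * sSup S = ⨆ b ∈ S, a * b

/-- A module over a quantale. -/
class QModule (Q : Type u) [IntegralQuantale Q] (M : Type v) extends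
    CompleteLattice M, SMul Q M where
  mul_smul' : ∀ (p q : Q) (m : M), (p * q) • m = p • (q • m)
  top_smul' : ∀ m : M, (⊤ : Q) • m = m
  smul_sSup' : ∀ (q : Q) (S : Set M), S.Nonempty → q • sSup S = ⨆ m ∈ S, q • m
  sSup_smul' : ∀ (S : Set Q) (m : M), S.Nonempty → (⨆ q ∈ S, (q : Q)) • m = ⨆ q ∈ S, q • m

/-- A multiplicative filter of a quantale. -/
def IsMFilter {Q : Type u} [IntegralQuantale Q] (F : Set Q) : Prop :=
  ⊤ ∈ F ∧ (∀ a ∈ F, ∀ b : Q, a ≤ b → b ∈ F) ∧ ∀ a ∈ F, ∀ b ∈ F, a * b ∈ F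

/-- `a ≼¹_F b`: `a` is locally less than `b` in one step; witnessed by a nonempty
family of pairs `(aᵢ, sᵢ)` with `sᵢ ∈ F`, `a ≤ ⨆ aᵢ` and `sᵢ • aᵢ ≤ b`. -/
def stepLE {Q : Type u} {M : Type v} [IntegralQuantale Q] [QModule Q M]
    (F : Set Q) (a b : M) : Prop :=
  ∃ P : Set (M × Q), P.Nonempty ∧ (∀ p ∈ P, p.2 ∈ F) ∧
    (a ≤ ⨆ p ∈ P, Prod.fst p) ∧ ∀ p ∈ P, p.2 • p.1 ≤ b

/-- `a ≼ⁿ_F b`: locally less than in `n` steps. -/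
def nStepLE {Q : Type u} {M : Type v} [IntegralQuantale Q] [QModule Q M]
    (F : Set Q) : ℕ → M → M → Prop
  | 0, a, b => a = b
  | n + 1, a, b => ∃ c : M, stepLE F a c ∧ nStepLE F n c b

/-- `a ≼_F b`: locally less than (in some positive number of steps). -/
def localLE {Q : Type u} {M : Type v} [IntegralQuantale Q] [QModule Q M]
    (F : Set Q) (a b : M) : Prop :=
  ∃ n : ℕ, 1 ≤ n ∧ nStepLE F n a b

/-- A complete lattice is shrinkable if every inequality `x ≤ ⨆ xᵢ` can be shrunk
to an equality `x = ⨆ yⱼ` with each `yⱼ` below a finite subsupremum of the `xᵢ`. -/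
def Shrinkable (L : Type u) [CompleteLattice L] : Prop :=
  ∀ (x : L) (S : Set L), S.Nonempty → x ≤ sSup S →
    ∃ Y : Set L, Y.Nonempty ∧ x = sSup Y ∧
      ∀ y ∈ Y, ∃ T : Finset L, T.Nonempty ∧ ↑T ⊆ S ∧ y ≤ T.sup id

/-- An m-filter `N` is normal over `M`: whenever `s ∈ N` and `s • m ≤ ⨆ S` for a
nonempty `S ⊆ M`, there is a nonempty family of pairs `(m´ⱼ, sⱼ)` with `sⱼ ∈ N`,
`m ≤ ⨆ m´ⱼ`, and each `sⱼ • m´ⱼ` below a finite subsupremum of `S`. -/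
def IsNormalOver {Q : Type u} [IntegralQuantale Q] (M : Type v) [QModule Q M]
    (N : Set Q) : Prop :=
  ∀ s ∈ N, ∀ m : M, ∀ S : Set M, S.Nonempty → s • m ≤ sSup S →
    ∃ P : Set (M × Q), P.Nonempty ∧ (m ≤ ⨆ p ∈ P, Prod.fst p) ∧
      ∀ p ∈ P, p.2 ∈ N ∧
        ∃ S₀ : Finset M, S₀.Nonempty ∧ ↑S₀ ⊆ S ∧ p.2 • p.1 ≤ S₀.sup id

/-!
Let `stepBelow N b` be the set of `m` with `q • m ≤ b` for some `q ∈ N`, so that `a ≼¹_N b`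
means `a ≤ ⨆ stepBelow N b`. This set is closed under binary joins (multiply the two
witnesses) and under `N`-predecessors. Hence `≼¹_N` is transitive: if `a ≼¹_N c ≼¹_N b` and
`s • m ≤ c` with `s ∈ N`, normality applied to `s • m ≤ c ≤ ⨆ stepBelow N b` covers `m` by
elements whose `N`-multiples lie below finite joins of `stepBelow N b`, hence in it.
-/

section QModule

variable {Q : Type u} {M : Type v} [IntegralQuantale Q] [QModule Q M]

theorem IntegralQuantale.mul_sup (a b c : Q) : a * (b ⊔ c) = a * b ⊔ a * c := by
  rw [← sSup_pair, IntegralQuantale.mul_sSup, iSup_pair]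

theorem IntegralQuantale.mul_le_left (a b : Q) : a * b ≤ a :=
  le_sup_left.trans_eq <| by rw [← mul_sup, sup_top_eq, ← one_eq_top, mul_one]

theorem QModule.smul_sup (q : Q) (m m' : M) : q • (m ⊔ m') = q • m ⊔ q • m' := by
  rw [← sSup_pair, QModule.smul_sSup' q _ (Set.insert_nonempty _ _), iSup_pair]

theorem QModule.sup_smul (q q' : Q) (m : M) : (q ⊔ q') • m = q • m ⊔ q' • m := by
  have h := QModule.sSup_smul' {q, q'} m (Set.insert_nonempty _ _)
  rwa [iSup_pair, iSup_pair] at h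

theorem QModule.smul_mono {q q' : Q} {m m' : M} (hq : q ≤ q') (hm : m ≤ m') :
    q • m ≤ q' • m' :=
  calc q • m ≤ q • m' := by rw [← sup_eq_right.mpr hm, smul_sup]; exact le_sup_left
    _ ≤ q' • m' := by rw [← sup_eq_right.mpr hq, sup_smul]; exact le_sup_left

end QModule

section StepLE

variable {Q : Type u} {M : Type v} [IntegralQuantale Q] [QModule Q M] {N : Set Q}

def stepBelow (N : Set Q) (b : M) : Set M := {m | ∃ q ∈ N, q • m ≤ b}

theorem self_mem_stepBelow (hN : IsMFilter N) (b : M) : b ∈ stepBelow N b :=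
  ⟨⊤, hN.1, (QModule.top_smul' b).le⟩

theorem supClosed_stepBelow (hN : IsMFilter N) (b : M) : SupClosed (stepBelow N b) := by
  rintro m ⟨q, hq, hqm⟩ m' ⟨q', hq', hqm'⟩
  refine ⟨q * q', hN.2.2 q hq q' hq', ?_⟩
  rw [QModule.smul_sup]
  refine sup_le ((QModule.smul_mono (IntegralQuantale.mul_le_left q q') le_rfl).trans hqm) ?_
  exact (QModule.smul_mono ((mul_comm q q').le.trans (IntegralQuantale.mul_le_left q' q))
    le_rfl).trans hqm'

theorem mem_stepBelow_of_smul_le (hN : IsMFilter N) {s : Q} {m m' b : M} (hs : s ∈ N)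
    (hm : s • m ≤ m') (hm' : m' ∈ stepBelow N b) : m ∈ stepBelow N b := by
  obtain ⟨q, hq, hqm'⟩ := hm'
  refine ⟨q * s, hN.2.2 q hq s hs, ?_⟩
  rw [QModule.mul_smul']
  exact (QModule.smul_mono le_rfl hm).trans hqm'

theorem stepLE_iff_le_sSup_stepBelow (hN : IsMFilter N) (a b : M) :
    stepLE N a b ↔ a ≤ sSup (stepBelow N b) := by
  constructor
  · rintro ⟨P, -, hPN, haP, hPb⟩
    exact haP.trans (iSup₂_le fun p hp => le_sSup ⟨p.2, hPN p hp, hPb p hp⟩)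
  · intro ha
    refine ⟨{p | p.2 ∈ N ∧ p.2 • p.1 ≤ b}, ⟨(b, ⊤), hN.1, (QModule.top_smul' b).le⟩,
      fun p hp => hp.1, ha.trans (sSup_le ?_), fun p hp => hp.2⟩
    rintro m ⟨q, hq, hqm⟩
    exact le_iSup₂_of_le (m, q) ⟨hq, hqm⟩ le_rfl

theorem le_sSup_stepBelow_of_smul_le (hN : IsMFilter N) (hnorm : IsNormalOver M N)
    {s : Q} {m b : M} (hs : s ∈ N) (hsm : s • m ≤ sSup (stepBelow N b)) :
    m ≤ sSup (stepBelow N b) := by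
  obtain ⟨P, -, hmP, hP⟩ := hnorm s hs m _ ⟨b, self_mem_stepBelow hN b⟩ hsm
  refine hmP.trans (iSup₂_le fun p hp => le_sSup ?_)
  obtain ⟨hpN, S₀, hS₀, hS₀sub, hpS₀⟩ := hP p hp
  have hsup : S₀.sup id ∈ stepBelow N b :=
    (supClosed_stepBelow hN b).finsetSup_mem hS₀ fun x hx => hS₀sub hx
  exact mem_stepBelow_of_smul_le hN hpN hpS₀ hsup

theorem stepLE_trans (hN : IsMFilter N) (hnorm : IsNormalOver M N) {a c b : M}
    (hac : stepLE N a c) (hcb : stepLE N c b) : stepLE N a b := by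
  rw [stepLE_iff_le_sSup_stepBelow hN] at hac hcb ⊢
  refine hac.trans (sSup_le ?_)
  rintro m ⟨s, hs, hsm⟩
  exact le_sSup_stepBelow_of_smul_le hN hnorm hs (hsm.trans hcb)

theorem stepLE_of_nStepLE_succ (hN : IsMFilter N) (hnorm : IsNormalOver M N) (n : ℕ) :
    ∀ {a b : M}, nStepLE N (n + 1) a b → stepLE N a b := by
  induction n with
  | zero => rintro a b ⟨c, hac, rfl⟩; exact hac
  | succ n ih => rintro a b ⟨c, hac, hcb⟩; exact stepLE_trans hN hnorm hac (ih hcb)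

end StepLE

/-- A normal m-filter is 1-step: `a ≼_N b` implies `a ≼¹_N b`. -/
theorem normal_implies_oneStep {Q : Type u} {M : Type v}
    [IntegralQuantale Q] [QModule Q M]
    (N : Set Q) (hN : IsMFilter N) (hnorm : IsNormalOver M N) :
    ∀ a b : M, localLE N a b → stepLE N a b := by
  rintro a b ⟨_ | n, hn, hab⟩
  · omega
  · exact stepLE_of_nStepLE_succ hN hnorm n hab
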